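/- Let N ∈ ℕ, q ∈ ℝ with |q| < 1, and ρ ≥ 0. Then for every i ∈ Fin N and every nonempty word w ∈ List (Fin N) of length n ≥ 1, the free difference quotient of the Wick polynomial satisfies ‖∂_i(ψ(w))‖_ρ ≤ n · (ρ + 2/(1−|q|))^{n−1}, where on the tensor square the norm ‖·‖_ρ is the weighted ℓ¹-norm of coefficients in the basis of pairs of monomials with weight ρ^{(length of first word)+(length of second word)}. (This is the bound ‖∂_i ψ_{\underline{j}}(Y₁,…,Y_N)‖_ρ ≤ n(ρ + 2/(1−|q|))^{n−1} from the proof of the paper's Corollary on Ξ_q.) -/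

import Mathlib

open scoped TensorProduct

/-- The Wick polynomials `ψ : List Λ → FreeAlgebra ℂ Λ`, defined recursively by `ψ([]) = 1` and
`ψ(a :: w) = X_a · ψ(w) − ∑_{j < length w} q^j · [a = w_j] · ψ(w with its j-th letter deleted)`. -/
noncomputable def wick {Λ : Type*} [DecidableEq Λ] (q : ℝ) : List Λ → FreeAlgebra ℂ Λ
  | [] => 1
  | a :: w => FreeAlgebra.ι ℂ a * wick q w -
      ∑ j : Fin w.length,
        ((q : ℂ) ^ (j : ℕ) * (if a = w.get j then 1 else 0)) • wick q (w.eraseIdx j)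
termination_by l => l.length
decreasing_by
  · simp
  · simp [List.length_eraseIdx]
    all_goals omega

/-- The coefficient `c_{u,v}(T)` of `u ⊗ v` in `T ∈ A ⊗ A`, `A = FreeAlgebra ℂ Λ`, obtained by
applying the `u`-th and `v`-th coordinate functionals of the monomial basis on each leg. -/
noncomputable def tensorCoeff {Λ : Type*} (u v : FreeMonoid Λ) :
    (FreeAlgebra ℂ Λ ⊗[ℂ] FreeAlgebra ℂ Λ) →ₗ[ℂ] ℂ :=
  (TensorProduct.lid ℂ ℂ).toLinearMap ∘ₗ
    TensorProduct.map
      ((Finsupp.lapply u) ∘ₗ (FreeAlgebra.basisFreeMonoid ℂ Λ).repr.toLinearMap)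
      ((Finsupp.lapply v) ∘ₗ (FreeAlgebra.basisFreeMonoid ℂ Λ).repr.toLinearMap)

/-- The weighted ℓ¹-norm of coefficients on the tensor square:
`‖T‖_ρ = ∑_{u,v} |c_{u,v}(T)| ρ^{length u + length v}` for `T = ∑ c_{u,v} u⊗v` (the sum, having
finite support, is taken as a `finsum`). -/
noncomputable def tensorCoeffNorm {Λ : Type*} (ρ : ℝ)
    (T : FreeAlgebra ℂ Λ ⊗[ℂ] FreeAlgebra ℂ Λ) : ℝ :=
  ∑ᶠ p : FreeMonoid Λ × FreeMonoid Λ,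
    ‖tensorCoeff p.1 p.2 T‖ * ρ ^ (p.1.toList.length + p.2.toList.length)

set_option linter.unusedVariables false
set_option linter.unusedSectionVars false

section BNorm
variable {ι M : Type*} [AddCommGroup M] [Module ℂ M] (b : Module.Basis ι ℂ M) (W : ι → ℝ)

noncomputable def bnorm (x : M) : ℝ := ∑ᶠ i, ‖b.repr x i‖ * W i

lemma bnorm_eq_sum {x : M} {s : Finset ι} (hs : (b.repr x).support ⊆ s) :
    bnorm b W x = ∑ i ∈ s, ‖b.repr x i‖ * W i := by
  refine finsum_eq_finset_sum_of_support_subset _ fun i hi => hs ?_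
  rw [Function.mem_support] at hi
  rw [Finsupp.mem_support_iff]
  intro h0
  exact hi (by rw [h0]; simp)

lemma bnorm_nonneg (hW : ∀ i, 0 ≤ W i) (x : M) : 0 ≤ bnorm b W x := by
  rw [bnorm_eq_sum b W (subset_refl (b.repr x).support)]
  exact Finset.sum_nonneg fun i _ => mul_nonneg (norm_nonneg _) (hW i)

lemma bnorm_zero : bnorm b W (0 : M) = 0 := by
  rw [bnorm_eq_sum b W (s := ∅) (by simp)]; simp

lemma bnorm_smul (c : ℂ) (x : M) : bnorm b W (c • x) = ‖c‖ * bnorm b W x := by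
  have hs : (b.repr (c • x)).support ⊆ (b.repr x).support := by
    rw [map_smul]; exact Finsupp.support_smul
  rw [bnorm_eq_sum b W hs, bnorm_eq_sum b W (subset_refl (b.repr x).support), Finset.mul_sum]
  refine Finset.sum_congr rfl fun i _ => ?_
  rw [map_smul, Finsupp.smul_apply, smul_eq_mul, norm_mul]
  ring

lemma bnorm_neg (x : M) : bnorm b W (-x) = bnorm b W x := by
  rw [← neg_one_smul ℂ x, bnorm_smul]; simp

lemma bnorm_add_le (hW : ∀ i, 0 ≤ W i) (x y : M) :
    bnorm b W (x + y) ≤ bnorm b W x + bnorm b W y := by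
  classical
  set s := (b.repr x).support ∪ (b.repr y).support with hsdef
  have hx : (b.repr x).support ⊆ s := Finset.subset_union_left
  have hy : (b.repr y).support ⊆ s := Finset.subset_union_right
  have hxy : (b.repr (x + y)).support ⊆ s := by
    rw [map_add]; exact Finsupp.support_add
  rw [bnorm_eq_sum b W hxy, bnorm_eq_sum b W hx, bnorm_eq_sum b W hy,
    ← Finset.sum_add_distrib]
  refine Finset.sum_le_sum fun i _ => ?_
  rw [map_add, Finsupp.add_apply, ← add_mul]
  exact mul_le_mul_of_nonneg_right (norm_add_le _ _) (hW i)

lemma bnorm_sub_le (hW : ∀ i, 0 ≤ W i) (x y : M) :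
    bnorm b W (x - y) ≤ bnorm b W x + bnorm b W y := by
  rw [sub_eq_add_neg]
  exact le_trans (bnorm_add_le b W hW x (-y)) (by rw [bnorm_neg])

lemma bnorm_sum_le (hW : ∀ i, 0 ≤ W i) {α : Type*} (s : Finset α) (f : α → M) :
    bnorm b W (∑ a ∈ s, f a) ≤ ∑ a ∈ s, bnorm b W (f a) := by
  classical
  induction s using Finset.cons_induction with
  | empty => simp [bnorm_zero]
  | cons a s ha ih =>
    rw [Finset.sum_cons, Finset.sum_cons]
    exact le_trans (bnorm_add_le b W hW _ _) (by linarith)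

lemma bnorm_basis (i : ι) : bnorm b W (b i) = W i := by
  rw [bnorm, finsum_eq_single _ i]
  · simp [Module.Basis.repr_self]
  · intro j hj
    simp [Module.Basis.repr_self, Finsupp.single_eq_of_ne hj]

lemma bnorm_map_le {ι₂ M₂ : Type*} [AddCommGroup M₂] [Module ℂ M₂]
    (b₂ : Module.Basis ι₂ ℂ M₂) (W₂ : ι₂ → ℝ) (hW₂ : ∀ i, 0 ≤ W₂ i)
    (L : M →ₗ[ℂ] M₂) {K : ℝ} (h : ∀ i, bnorm b₂ W₂ (L (b i)) ≤ K * W i) (x : M) :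
    bnorm b₂ W₂ (L x) ≤ K * bnorm b W x := by
  conv_lhs => rw [← b.linearCombination_repr x]
  rw [Finsupp.linearCombination_apply, Finsupp.sum, map_sum]
  refine le_trans (bnorm_sum_le b₂ W₂ hW₂ _ _) ?_
  rw [bnorm_eq_sum b W (subset_refl (b.repr x).support), Finset.mul_sum]
  refine Finset.sum_le_sum fun i _ => ?_
  rw [map_smul, bnorm_smul]
  calc ‖b.repr x i‖ * bnorm b₂ W₂ (L (b i)) ≤ ‖b.repr x i‖ * (K * W i) :=
        mul_le_mul_of_nonneg_left (h i) (norm_nonneg _)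
    _ = K * (‖b.repr x i‖ * W i) := by ring

end BNorm

section FA
variable {Λ : Type*}

lemma fb_apply (u : FreeMonoid Λ) :
    (FreeAlgebra.basisFreeMonoid ℂ Λ) u =
      (FreeAlgebra.equivMonoidAlgebraFreeMonoid (R := ℂ) (X := Λ)).symm
        (MonoidAlgebra.single u 1) := by
  simp [FreeAlgebra.basisFreeMonoid]

lemma fb_mul (u v : FreeMonoid Λ) :
    (FreeAlgebra.basisFreeMonoid ℂ Λ) u * (FreeAlgebra.basisFreeMonoid ℂ Λ) v =
      (FreeAlgebra.basisFreeMonoid ℂ Λ) (u * v) := by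
  rw [fb_apply, fb_apply, fb_apply, ← map_mul, MonoidAlgebra.single_mul_single, one_mul]

lemma fb_one : (FreeAlgebra.basisFreeMonoid ℂ Λ) 1 = 1 := by
  rw [fb_apply, ← MonoidAlgebra.one_def, map_one]

lemma fb_of (a : Λ) : (FreeAlgebra.basisFreeMonoid ℂ Λ) (FreeMonoid.of a) = FreeAlgebra.ι ℂ a := by
  rw [fb_apply, AlgEquiv.symm_apply_eq]
  simp [FreeAlgebra.equivMonoidAlgebraFreeMonoid, MonoidAlgebra.of_apply]

/-- weight on monomials -/
noncomputable def wt (ρ : ℝ) (v : FreeMonoid Λ) : ℝ := ρ ^ v.toList.length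

/-- weight on pairs of monomials -/
noncomputable def wt2 (ρ : ℝ) (p : FreeMonoid Λ × FreeMonoid Λ) : ℝ :=
  ρ ^ (p.1.toList.length + p.2.toList.length)

noncomputable def tB : Module.Basis (FreeMonoid Λ × FreeMonoid Λ) ℂ
    (FreeAlgebra ℂ Λ ⊗[ℂ] FreeAlgebra ℂ Λ) :=
  (FreeAlgebra.basisFreeMonoid ℂ Λ).tensorProduct (FreeAlgebra.basisFreeMonoid ℂ Λ)

variable {ρ : ℝ}

lemma tB_apply (p : FreeMonoid Λ × FreeMonoid Λ) :
    (tB : Module.Basis _ ℂ _) p =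
      (FreeAlgebra.basisFreeMonoid ℂ Λ) p.1 ⊗ₜ[ℂ] (FreeAlgebra.basisFreeMonoid ℂ Λ) p.2 := by
  unfold tB
  exact Module.Basis.tensorProduct_apply' _ _ p

lemma wt_nonneg (hρ : 0 ≤ ρ) : ∀ v : FreeMonoid Λ, 0 ≤ wt ρ v := fun v => pow_nonneg hρ _

lemma wt2_nonneg (hρ : 0 ≤ ρ) : ∀ p : FreeMonoid Λ × FreeMonoid Λ, 0 ≤ wt2 ρ p :=
  fun p => pow_nonneg hρ _

lemma nu_one : bnorm (FreeAlgebra.basisFreeMonoid ℂ Λ) (wt ρ) 1 = 1 := by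
  rw [← fb_one, bnorm_basis]
  simp [wt]

lemma nu_mul_left (hρ : 0 ≤ ρ) (a : Λ) (P : FreeAlgebra ℂ Λ) :
    bnorm (FreeAlgebra.basisFreeMonoid ℂ Λ) (wt ρ) (FreeAlgebra.ι ℂ a * P) ≤
      ρ * bnorm (FreeAlgebra.basisFreeMonoid ℂ Λ) (wt ρ) P := by
  refine bnorm_map_le _ _ _ _ (wt_nonneg hρ) (LinearMap.mulLeft ℂ (FreeAlgebra.ι ℂ a)) ?_ P
  intro v
  rw [LinearMap.mulLeft_apply, ← fb_of, fb_mul, bnorm_basis]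
  simp [wt, pow_succ, mul_comm]

lemma tau_mul_left (hρ : 0 ≤ ρ) (a : Λ) (T : FreeAlgebra ℂ Λ ⊗[ℂ] FreeAlgebra ℂ Λ) :
    bnorm tB (wt2 ρ) ((FreeAlgebra.ι ℂ a ⊗ₜ[ℂ] (1 : FreeAlgebra ℂ Λ)) * T) ≤
      ρ * bnorm tB (wt2 ρ) T := by
  refine bnorm_map_le _ _ _ _ (wt2_nonneg hρ)
    (LinearMap.mulLeft ℂ (FreeAlgebra.ι ℂ a ⊗ₜ[ℂ] (1 : FreeAlgebra ℂ Λ))) ?_ T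
  intro p
  rw [LinearMap.mulLeft_apply]
  have : (FreeAlgebra.ι ℂ a ⊗ₜ[ℂ] (1 : FreeAlgebra ℂ Λ)) * tB p =
      tB (FreeMonoid.of a * p.1, p.2) := by
    rw [tB_apply, tB_apply, ← fb_of,
      ← fb_one (Λ := Λ), Algebra.TensorProduct.tmul_mul_tmul, fb_mul, fb_mul, one_mul]
  rw [this, bnorm_basis]
  simp [wt2, pow_add, pow_succ]
  ring_nf
  rfl

lemma tau_one_tmul (hρ : 0 ≤ ρ) (Q : FreeAlgebra ℂ Λ) :
    bnorm tB (wt2 ρ) ((1 : FreeAlgebra ℂ Λ) ⊗ₜ[ℂ] Q) ≤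
      bnorm (FreeAlgebra.basisFreeMonoid ℂ Λ) (wt ρ) Q := by
  have h := bnorm_map_le (FreeAlgebra.basisFreeMonoid ℂ Λ) (wt ρ) tB (wt2 ρ) (wt2_nonneg hρ)
    (TensorProduct.mk ℂ (FreeAlgebra ℂ Λ) (FreeAlgebra ℂ Λ) 1) (K := 1) ?_ Q
  · simpa using h
  intro v
  have : (TensorProduct.mk ℂ (FreeAlgebra ℂ Λ) (FreeAlgebra ℂ Λ) 1)
      ((FreeAlgebra.basisFreeMonoid ℂ Λ) v) = tB (1, v) := by
    rw [tB_apply, ← fb_one]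
    rfl
  rw [this, bnorm_basis]
  simp [wt2, wt]

end FA
section Main
variable {Λ : Type*} [DecidableEq Λ] {q ρ : ℝ}

lemma geo_le (hq : |q| < 1) (n : ℕ) :
    ∑ j ∈ Finset.range n, |q| ^ j ≤ 1 / (1 - |q|) := by
  have h1 : (0:ℝ) < 1 - |q| := by linarith
  have hne : |q| ≠ 1 := by intro h; rw [h] at hq; linarith
  rw [geom_sum_eq hne]
  have key : (|q|^n - 1)/(|q| - 1) = (1 - |q|^n)/(1 - |q|) := by
    rw [← neg_div_neg_eq (1 - |q|^n) (1 - |q|)]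
    congr 1 <;> ring
  rw [key]
  gcongr
  nlinarith [pow_nonneg (abs_nonneg q) n]

lemma arithG {c : ℝ} (hρ : 0 ≤ ρ) (hc2 : 2 ≤ c) (m : ℕ) :
    ρ*(ρ+c)^m + (c/2)*(ρ+c)^(m-1) ≤ (ρ+c)^(m+1) := by
  have hx : 1 ≤ ρ + c := by linarith
  have hp : (ρ+c)^(m-1) ≤ (ρ+c)^m := pow_le_pow_right₀ hx (Nat.sub_le m 1)
  have he : (ρ+c)^(m+1) = (ρ+c)^m * (ρ+c) := pow_succ _ _
  have p1 : (0:ℝ) ≤ (ρ+c)^m := by positivity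
  nlinarith [hp, p1]

lemma arithF {c : ℝ} (hρ : 0 ≤ ρ) (hc2 : 2 ≤ c) (m : ℕ) :
    (ρ+c)^m + ρ*((m:ℝ) * (ρ+c)^(m-1)) + (c/2)*(((m-1:ℕ):ℝ) * (ρ+c)^(m-1-1)) ≤
      ((m:ℝ)+1) * (ρ+c)^m := by
  have hx : 1 ≤ ρ + c := by linarith
  rcases Nat.eq_zero_or_pos m with h0 | h1
  · subst h0; simp
  · have e1 : (ρ+c)^m = (ρ+c)^(m-1) * (ρ+c) := by rw [← pow_succ]; congr 1; omega
    have e2 : (ρ+c)^(m-1-1) ≤ (ρ+c)^(m-1) := pow_le_pow_right₀ hx (by omega)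
    have e3 : ((m-1:ℕ):ℝ) ≤ (m:ℝ) := Nat.cast_le.mpr (Nat.sub_le m 1)
    have p1 : (0:ℝ) ≤ (ρ+c)^(m-1) := by positivity
    have p2 : (0:ℝ) ≤ (ρ+c)^(m-1-1) := by positivity
    have key : ((m-1:ℕ):ℝ) * (ρ+c)^(m-1-1) ≤ (m:ℝ) * (ρ+c)^(m-1) :=
      mul_le_mul e3 e2 p2 (Nat.cast_nonneg _)
    have hm1 : (1:ℝ) ≤ (m:ℝ) := by exact_mod_cast h1
    nlinarith [mul_le_mul_of_nonneg_left key (show (0:ℝ) ≤ c/2 by linarith), e1, p1,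
      mul_nonneg (Nat.cast_nonneg m : (0:ℝ) ≤ (m:ℝ)) p1]

lemma hc2_of (hq : |q| < 1) : 2 ≤ 2 / (1 - |q|) := by
  have h1 : (0:ℝ) < 1 - |q| := by linarith
  rw [le_div_iff₀ h1]
  nlinarith [abs_nonneg q]

lemma coef_norm_le (hq : |q| < 1) (a : Λ) (w' : List Λ) (j : Fin w'.length) :
    ‖(q:ℂ)^(j:ℕ) * (if a = w'.get j then (1:ℂ) else 0)‖ ≤ |q|^(j:ℕ) := by
  rw [norm_mul, norm_pow, Complex.norm_real, Real.norm_eq_abs]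
  have h2 : ‖(if a = w'.get j then (1:ℂ) else 0)‖ ≤ 1 := by split <;> simp
  nlinarith [pow_nonneg (abs_nonneg q) (j:ℕ),
    norm_nonneg (if a = w'.get j then (1:ℂ) else 0)]

lemma wickG (hq : |q| < 1) (hρ : 0 ≤ ρ) :
    ∀ (n : ℕ) (w : List Λ), w.length ≤ n →
      bnorm (FreeAlgebra.basisFreeMonoid ℂ Λ) (wt ρ) (wick q w) ≤
        (ρ + 2 / (1 - |q|)) ^ w.length := by
  have h1 : (0:ℝ) < 1 - |q| := by linarith
  set c := 2 / (1 - |q|) with hc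
  have hc2 : 2 ≤ c := hc2_of hq
  have hnil : bnorm (FreeAlgebra.basisFreeMonoid ℂ Λ) (wt ρ) (wick q ([] : List Λ)) ≤
      (ρ + c) ^ (List.length ([] : List Λ)) := by
    rw [show wick q ([] : List Λ) = 1 from by rw [wick], nu_one]
    simp
  intro n
  induction n with
  | zero =>
    intro w hw
    rw [List.eq_nil_of_length_eq_zero (Nat.le_zero.1 hw)]
    exact hnil
  | succ n ih =>
    intro w hw
    match w with
    | [] => exact hnil
    | a :: w' =>
      rw [show wick q (a :: w') = FreeAlgebra.ι ℂ a * wick q w' -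
          ∑ j : Fin w'.length,
            ((q : ℂ) ^ (j : ℕ) * (if a = w'.get j then 1 else 0)) • wick q (w'.eraseIdx j)
        from by rw [wick]]
      have hm' : w'.length ≤ n := by simp at hw; omega
      have hA : bnorm (FreeAlgebra.basisFreeMonoid ℂ Λ) (wt ρ)
          (FreeAlgebra.ι ℂ a * wick q w') ≤ ρ * (ρ + c) ^ w'.length :=
        le_trans (nu_mul_left hρ a _) (mul_le_mul_of_nonneg_left (ih w' hm') hρ)
      have hB : bnorm (FreeAlgebra.basisFreeMonoid ℂ Λ) (wt ρ)
          (∑ j : Fin w'.length,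
            ((q : ℂ) ^ (j : ℕ) * (if a = w'.get j then 1 else 0)) • wick q (w'.eraseIdx j)) ≤
          (c/2) * (ρ + c) ^ (w'.length - 1) := by
        refine le_trans (bnorm_sum_le _ _ (wt_nonneg hρ) _ _) ?_
        have hterm : ∀ j : Fin w'.length,
            bnorm (FreeAlgebra.basisFreeMonoid ℂ Λ) (wt ρ)
              (((q : ℂ) ^ (j : ℕ) * (if a = w'.get j then 1 else 0)) • wick q (w'.eraseIdx j)) ≤
            |q| ^ (j:ℕ) * (ρ + c) ^ (w'.length - 1) := by
          intro j
          rw [bnorm_smul]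
          have hlen : (w'.eraseIdx (j:ℕ)).length = w'.length - 1 := by
            rw [List.length_eraseIdx]
            simp [j.isLt]
          have hble : bnorm (FreeAlgebra.basisFreeMonoid ℂ Λ) (wt ρ)
              (wick q (w'.eraseIdx (j:ℕ))) ≤ (ρ + c) ^ (w'.length - 1) := by
            have := ih (w'.eraseIdx (j:ℕ)) (by omega)
            rwa [hlen] at this
          exact mul_le_mul (coef_norm_le hq a w' j) hble
            (bnorm_nonneg _ _ (wt_nonneg hρ) _) (pow_nonneg (abs_nonneg q) _)
        refine le_trans (Finset.sum_le_sum fun j _ => hterm j) ?_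
        rw [← Finset.sum_mul, Fin.sum_univ_eq_sum_range (fun j => |q| ^ j) w'.length]
        refine mul_le_mul_of_nonneg_right (le_trans (geo_le hq w'.length) (le_of_eq ?_))
          (pow_nonneg (by linarith) _)
        rw [hc]; ring
      refine le_trans (bnorm_sub_le _ _ (wt_nonneg hρ) _ _) ?_
      have := arithG (c := c) hρ hc2 w'.length
      calc bnorm _ (wt ρ) (FreeAlgebra.ι ℂ a * wick q w') + bnorm _ (wt ρ) _ ≤
            ρ * (ρ + c) ^ w'.length + (c/2) * (ρ + c) ^ (w'.length - 1) := add_le_add hA hB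
        _ ≤ (ρ + c) ^ (w'.length + 1) := this
        _ = (ρ + c) ^ (a :: w').length := by simp

end Main

section Final
variable {Λ : Type*} [DecidableEq Λ] {q ρ : ℝ}

lemma tensorCoeff_eq (u v : FreeMonoid Λ) (T : FreeAlgebra ℂ Λ ⊗[ℂ] FreeAlgebra ℂ Λ) :
    tensorCoeff u v T = (tB.repr T) (u, v) := by
  induction T using TensorProduct.induction_on with
  | zero => simp
  | tmul x y =>
      simp [tensorCoeff, tB, Module.Basis.tensorProduct_repr_tmul_apply, smul_eq_mul]
      ring
  | add x y hx hy => simp [map_add, hx, hy]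

lemma tcn_eq (ρ : ℝ) (T : FreeAlgebra ℂ Λ ⊗[ℂ] FreeAlgebra ℂ Λ) :
    tensorCoeffNorm ρ T = bnorm tB (wt2 ρ) T := by
  unfold tensorCoeffNorm bnorm
  exact finsum_congr fun p => by rw [tensorCoeff_eq]; rfl

lemma wickF (hq : |q| < 1) (hρ : 0 ≤ ρ)
    (D : FreeAlgebra ℂ Λ →ₗ[ℂ] FreeAlgebra ℂ Λ ⊗[ℂ] FreeAlgebra ℂ Λ) (i : Λ)
    (hD1 : D 1 = 0)
    (hDX : ∀ a, D (FreeAlgebra.ι ℂ a) =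
      if a = i then (1 : FreeAlgebra ℂ Λ) ⊗ₜ[ℂ] (1 : FreeAlgebra ℂ Λ) else 0)
    (hDLeib : ∀ P Q : FreeAlgebra ℂ Λ, D (P * Q) =
      D P * ((1 : FreeAlgebra ℂ Λ) ⊗ₜ[ℂ] Q)
        + (P ⊗ₜ[ℂ] (1 : FreeAlgebra ℂ Λ)) * D Q) :
    ∀ (n : ℕ) (w : List Λ), w.length ≤ n →
      bnorm tB (wt2 ρ) (D (wick q w)) ≤
        (w.length : ℝ) * (ρ + 2 / (1 - |q|)) ^ (w.length - 1) := by
  have h1 : (0:ℝ) < 1 - |q| := by linarith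
  set c := 2 / (1 - |q|) with hc
  have hc2 : 2 ≤ c := hc2_of hq
  have hxpos : (0:ℝ) < ρ + c := by linarith
  have hnil : bnorm tB (wt2 ρ) (D (wick q ([] : List Λ))) ≤
      ((List.length ([] : List Λ) : ℝ)) * (ρ + c) ^ (List.length ([] : List Λ) - 1) := by
    rw [show wick q ([] : List Λ) = 1 from by rw [wick], hD1, bnorm_zero]
    simp
  intro n
  induction n with
  | zero =>
    intro w hw
    rw [List.eq_nil_of_length_eq_zero (Nat.le_zero.1 hw)]
    exact hnil
  | succ n ih =>
    intro w hw
    match w with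
    | [] => exact hnil
    | a :: w' =>
      rw [show wick q (a :: w') = FreeAlgebra.ι ℂ a * wick q w' -
          ∑ j : Fin w'.length,
            ((q : ℂ) ^ (j : ℕ) * (if a = w'.get j then 1 else 0)) • wick q (w'.eraseIdx j)
        from by rw [wick]]
      rw [map_sub, hDLeib, hDX, map_sum]
      simp only [map_smul]
      have hm' : w'.length ≤ n := by simp at hw; omega
      have hT1 : bnorm tB (wt2 ρ)
          ((if a = i then (1 : FreeAlgebra ℂ Λ) ⊗ₜ[ℂ] (1 : FreeAlgebra ℂ Λ) else 0) *
            ((1 : FreeAlgebra ℂ Λ) ⊗ₜ[ℂ] wick q w')) ≤ (ρ + c) ^ w'.length := by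
        by_cases hai : a = i
        · rw [if_pos hai, ← Algebra.TensorProduct.one_def, one_mul]
          exact le_trans (tau_one_tmul hρ _) (wickG hq hρ n w' hm')
        · rw [if_neg hai, zero_mul, bnorm_zero]
          positivity
      have hT2 : bnorm tB (wt2 ρ)
          ((FreeAlgebra.ι ℂ a ⊗ₜ[ℂ] (1 : FreeAlgebra ℂ Λ)) * D (wick q w')) ≤
          ρ * ((w'.length : ℝ) * (ρ + c) ^ (w'.length - 1)) :=
        le_trans (tau_mul_left hρ a _) (mul_le_mul_of_nonneg_left (ih w' hm') hρ)
      have hT3 : bnorm tB (wt2 ρ)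
          (∑ j : Fin w'.length,
            ((q : ℂ) ^ (j : ℕ) * (if a = w'.get j then 1 else 0)) •
              D (wick q (w'.eraseIdx j))) ≤
          (c/2) * (((w'.length - 1 : ℕ) : ℝ) * (ρ + c) ^ (w'.length - 1 - 1)) := by
        refine le_trans (bnorm_sum_le _ _ (wt2_nonneg hρ) _ _) ?_
        have hterm : ∀ j : Fin w'.length,
            bnorm tB (wt2 ρ)
              (((q : ℂ) ^ (j : ℕ) * (if a = w'.get j then 1 else 0)) •
                D (wick q (w'.eraseIdx j))) ≤
            |q| ^ (j:ℕ) * (((w'.length - 1 : ℕ) : ℝ) * (ρ + c) ^ (w'.length - 1 - 1)) := by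
          intro j
          rw [bnorm_smul]
          have hlen : (w'.eraseIdx (j:ℕ)).length = w'.length - 1 := by
            rw [List.length_eraseIdx]
            simp [j.isLt]
          have hble : bnorm tB (wt2 ρ) (D (wick q (w'.eraseIdx (j:ℕ)))) ≤
              ((w'.length - 1 : ℕ) : ℝ) * (ρ + c) ^ (w'.length - 1 - 1) := by
            have := ih (w'.eraseIdx (j:ℕ)) (by omega)
            rwa [hlen] at this
          exact mul_le_mul (coef_norm_le hq a w' j) hble
            (bnorm_nonneg _ _ (wt2_nonneg hρ) _) (pow_nonneg (abs_nonneg q) _)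
        refine le_trans (Finset.sum_le_sum fun j _ => hterm j) ?_
        rw [← Finset.sum_mul, Fin.sum_univ_eq_sum_range (fun j => |q| ^ j) w'.length]
        refine mul_le_mul (le_trans (geo_le hq w'.length) (le_of_eq (by rw [hc]; ring)))
          le_rfl ?_ (by linarith)
        positivity
      refine le_trans (bnorm_sub_le _ _ (wt2_nonneg hρ) _ _) ?_
      refine le_trans (add_le_add (bnorm_add_le _ _ (wt2_nonneg hρ) _ _) le_rfl) ?_
      calc bnorm tB (wt2 ρ) _ + bnorm tB (wt2 ρ) _ + bnorm tB (wt2 ρ) _ ≤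
            (ρ + c) ^ w'.length + ρ * ((w'.length : ℝ) * (ρ + c) ^ (w'.length - 1)) +
              (c/2) * (((w'.length - 1 : ℕ) : ℝ) * (ρ + c) ^ (w'.length - 1 - 1)) :=
          add_le_add (add_le_add hT1 hT2) hT3
        _ ≤ ((w'.length : ℝ) + 1) * (ρ + c) ^ w'.length := arithF hρ hc2 w'.length
        _ = ((a :: w').length : ℝ) * (ρ + c) ^ ((a :: w').length - 1) := by
          simp [Nat.add_sub_cancel]

end Final


/-- For `|q| < 1` and `ρ ≥ 0`, the free difference quotient `∂_i` (the unique linear map with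
`∂_i(1) = 0`, `∂_i(X_a) = [a = i]·1⊗1` and the Leibniz rule) of the Wick polynomial of a
nonempty word of length `n ≥ 1` satisfies `‖∂_i(ψ(w))‖_ρ ≤ n·(ρ + 2/(1−|q|))^{n−1}`. -/
theorem tensorCoeffNorm_wick_le {N : ℕ} (q ρ : ℝ) (hq : |q| < 1) (hρ : 0 ≤ ρ)
    (D : Fin N → (FreeAlgebra ℂ (Fin N) →ₗ[ℂ] FreeAlgebra ℂ (Fin N) ⊗[ℂ] FreeAlgebra ℂ (Fin N)))
    (hD1 : ∀ i, D i 1 = 0)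
    (hDX : ∀ i a, D i (FreeAlgebra.ι ℂ a) =
      if a = i then (1 : FreeAlgebra ℂ (Fin N)) ⊗ₜ[ℂ] (1 : FreeAlgebra ℂ (Fin N)) else 0)
    (hDLeib : ∀ i (P Q : FreeAlgebra ℂ (Fin N)), D i (P * Q) =
      D i P * ((1 : FreeAlgebra ℂ (Fin N)) ⊗ₜ[ℂ] Q)
        + (P ⊗ₜ[ℂ] (1 : FreeAlgebra ℂ (Fin N))) * D i Q)
    (i : Fin N) (w : List (Fin N)) (hw : w ≠ []) :
    tensorCoeffNorm ρ (D i (wick q w)) ≤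
      (w.length : ℝ) * (ρ + 2 / (1 - |q|)) ^ (w.length - 1) := by
  rw [tcn_eq]
  exact wickF hq hρ (D i) i (hD1 i) (hDX i) (hDLeib i) w.length w le_rfl
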